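/- arXiv:2105.01326 — 11 statements merged into one kernel-verified Lean document; each statement's English description precedes it below -/
import Mathlib

section
/- If (Ω,⋆) is an associative semigroup such that for every pair (β,γ) ∈ Ω² there exists a unique α ∈ Ω with α⋆β = γ (the right inverse condition), and we define α▷β to be the unique element with (α▷β)⋆β = α and α→β := β, then for all α,β,γ ∈ Ω one has (α▷γ)▷(β▷γ) = α▷β; consequently (Ω,→,▷) satisfies the EAS axioms: → is associative, (α▷(β→γ))→(β▷γ) = (α→β)▷γ, and (α▷(β→γ))▷(β▷γ) = α▷β. -/
/-- Extended associative semigroup axioms for operations `r` (→) and `t` (▷). -/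
def IsEAS {Ω : Type*} (r t : Ω → Ω → Ω) : Prop :=
  (∀ a b c, r a (r b c) = r (r a b) c) ∧
  (∀ a b c, r (t a (r b c)) (t b c) = t (r a b) c) ∧
  (∀ a b c, t (t a (r b c)) (t b c) = t a b)

theorem stmt0 {Ω : Type*} (mul : Ω → Ω → Ω)
    (hassoc : ∀ a b c, mul (mul a b) c = mul a (mul b c))
    (hinv : ∀ b c : Ω, ∃! a : Ω, mul a b = c)
    (tri : Ω → Ω → Ω) (htri : ∀ a b, mul (tri a b) b = a) :
    (∀ a b c : Ω, tri (tri a c) (tri b c) = tri a b) ∧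
      IsEAS (fun _ b => b) tri := by
  have huniq : ∀ x y b c : Ω, mul x b = c → mul y b = c → x = y := by
    intro x y b c hx hy
    obtain ⟨a, _, ha⟩ := hinv b c
    rw [ha x hx, ha y hy]
  have key : ∀ a b c : Ω, tri (tri a c) (tri b c) = tri a b := by
    intro a b c
    have h1 : mul (tri a b) (tri b c) = tri a c := by
      apply huniq _ _ c a
      · rw [hassoc, htri, htri]
      · exact htri a c
    exact huniq _ _ (tri b c) (tri a c) (htri (tri a c) (tri b c)) h1
  exact ⟨key, fun _ _ _ => rfl, fun a b c => rfl, fun a b c => key a b c⟩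
end

section
/- Let (Ω,⋆) be a group with α→β := β and α▷β := α⋆β⁻¹ (the structure EAS'(Ω,⋆)). Then (Ω,→,▷) is a dual CEDS (i.e. satisfies additionally (α▷β)→γ = α→γ and (α▷β)▷γ = (α▷γ)▷β for all α,β,γ) if and only if the group (Ω,⋆) is abelian. -/
/-- Dual CEDS axioms: EAS axioms plus the two dual complementary axioms. -/
def IsDualCEDS {Ω : Type*} (r t : Ω → Ω → Ω) : Prop :=
  IsEAS r t ∧
  (∀ a b c, r (t a b) c = r a c) ∧
  (∀ a b c, t (t a b) c = t (t a c) b)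

theorem stmt2 {Ω : Type*} [Group Ω] :
    IsDualCEDS (fun _ b : Ω => b) (fun a b : Ω => a * b⁻¹) ↔
      ∀ a b : Ω, a * b = b * a := by
  constructor
  · rintro ⟨-, -, h5⟩ a b
    have h := h5 1 a⁻¹ b⁻¹
    simpa using h
  · intro hcomm
    refine ⟨⟨fun a b c => rfl, fun a b c => rfl, fun a b c => by group⟩,
      fun a b c => rfl, fun a b c => ?_⟩
    simp only
    rw [mul_assoc, mul_assoc, hcomm b⁻¹ c⁻¹]
end

section
/- Let (Ω,⋆) be an associative semigroup and define α→β := α⋆β and α▷β := α (the structure EAS(Ω,⋆)). Then (Ω,→,▷) is an EAS. Moreover it is a CEDS if and only if (α⋆β)⋆γ = (β⋆α)⋆γ for all α,β,γ ∈ Ω. -/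
/-- Commutative extended diassociative semigroup axioms. -/
def IsCEDS {Ω : Type*} (r t : Ω → Ω → Ω) : Prop :=
  (∀ a b c, r a (r b c) = r (r a b) c) ∧
  (∀ a b c, r (r a b) c = r (r b a) c) ∧
  (∀ a b c, t a (r b c) = t a c) ∧
  (∀ a b c, r (t a c) (t b c) = t (r a b) c) ∧
  (∀ a b c, t (t a c) (t b c) = t a b)

theorem stmt3 {Ω : Type*} [Semigroup Ω] :
    IsEAS (fun a b : Ω => a * b) (fun a _ : Ω => a) ∧
      (IsCEDS (fun a b : Ω => a * b) (fun a _ : Ω => a) ↔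
        ∀ a b c : Ω, (a * b) * c = (b * a) * c) := by
  refine ⟨⟨fun a b c => (mul_assoc a b c).symm, fun a b c => rfl, fun a b c => rfl⟩, ?_, ?_⟩
  · intro h
    exact h.2.1
  · intro h
    exact ⟨fun a b c => (mul_assoc a b c).symm, h, fun _ _ _ => rfl,
      fun _ _ _ => rfl, fun _ _ _ => rfl⟩
end

section
/- Let Ω be a set with two binary operations →,▷, and let φ : Ω×Ω → Ω×Ω be defined by φ(α,β) = (α→β, α▷β), and τ(α,β) = (β,α). Then (Ω,→,▷) is an EAS if and only if (Id×φ)∘(φ×Id)∘(Id×φ) = (φ×Id)∘(Id×τ)∘(φ×Id) as maps Ω³ → Ω³. -/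
/-- The structural map φ(α,β) = (α→β, α▷β). -/
def structMap {Ω : Type*} (r t : Ω → Ω → Ω) : Ω × Ω → Ω × Ω :=
  fun p => (r p.1 p.2, t p.1 p.2)

/-- `Id × f` on `Ω × Ω × Ω`. -/
def idTimes {Ω : Type*} (f : Ω × Ω → Ω × Ω) : Ω × Ω × Ω → Ω × Ω × Ω :=
  fun p => (p.1, f p.2)

/-- `f × Id` on `Ω × Ω × Ω`. -/
def timesId {Ω : Type*} (f : Ω × Ω → Ω × Ω) : Ω × Ω × Ω → Ω × Ω × Ω :=
  fun p => ((f (p.1, p.2.1)).1, (f (p.1, p.2.1)).2, p.2.2)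

/-- The flip map τ(α,β) = (β,α). -/
def flipMap {Ω : Type*} : Ω × Ω → Ω × Ω := fun p => (p.2, p.1)

theorem stmt4 {Ω : Type*} (r t : Ω → Ω → Ω) :
    IsEAS r t ↔
      idTimes (structMap r t) ∘ timesId (structMap r t) ∘ idTimes (structMap r t) =
        timesId (structMap r t) ∘ idTimes flipMap ∘ timesId (structMap r t) := by
  constructor
  · rintro ⟨h1, h2, h3⟩
    funext p
    obtain ⟨a, b, c⟩ := p
    simp only [Function.comp, idTimes, timesId, structMap, flipMap]
    exact Prod.ext (h1 a b c) (Prod.ext (h2 a b c) (h3 a b c))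
  · intro h
    have H : ∀ a b c : Ω, _ := fun a b c => congrFun h (a, b, c)
    refine ⟨fun a b c => ?_, fun a b c => ?_, fun a b c => ?_⟩
    · exact congrArg Prod.fst (H a b c)
    · exact congrArg (fun q => q.2.1) (H a b c)
    · exact congrArg (fun q => q.2.2) (H a b c)
end

section
/- Let Ω be a set with two binary operations →,▷ such that the map φ(α,β) = (α→β, α▷β) is a bijection of Ω², and write φ⁻¹(α,β) = (α↷β, α▶β). Then (Ω,→,▷) is an EAS if and only if (Ω,↷,▶) is an EAS. -/
def braidF {Ω : Type*} (r t : Ω → Ω → Ω) (p : Ω × Ω × Ω) : Ω × Ω × Ω :=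
  (r p.1 (r p.2.1 p.2.2), r (t p.1 (r p.2.1 p.2.2)) (t p.2.1 p.2.2),
    t (t p.1 (r p.2.1 p.2.2)) (t p.2.1 p.2.2))

def braidG {Ω : Type*} (r t : Ω → Ω → Ω) (p : Ω × Ω × Ω) : Ω × Ω × Ω :=
  (r (r p.1 p.2.1) p.2.2, t (r p.1 p.2.1) p.2.2, t p.1 p.2.1)

lemma braidFF {Ω : Type*} (r t r' t' : Ω → Ω → Ω)
    (hr : ∀ a b, r (r' a b) (t' a b) = a) (ht : ∀ a b, t (r' a b) (t' a b) = b)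
    (p : Ω × Ω × Ω) : braidF r t (braidF r' t' p) = p := by
  simp [braidF, hr, ht]

lemma braidGG {Ω : Type*} (r t r' t' : Ω → Ω → Ω)
    (hr : ∀ a b, r (r' a b) (t' a b) = a) (ht : ∀ a b, t (r' a b) (t' a b) = b)
    (p : Ω × Ω × Ω) : braidG r t (braidG r' t' p) = p := by
  simp [braidG, hr, ht]

lemma key {Ω : Type*} (r t r' t' : Ω → Ω → Ω)
    (hinv₁ : ∀ p : Ω × Ω, structMap r' t' (structMap r t p) = p)
    (hinv₂ : ∀ p : Ω × Ω, structMap r t (structMap r' t' p) = p)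
    (h : IsEAS r t) : IsEAS r' t' := by
  obtain ⟨h1, h2, h3⟩ := h
  have hr1 : ∀ a b, r' (r a b) (t a b) = a := fun a b => congrArg Prod.fst (hinv₁ (a, b))
  have ht1 : ∀ a b, t' (r a b) (t a b) = b := fun a b => congrArg Prod.snd (hinv₁ (a, b))
  have hr2 : ∀ a b, r (r' a b) (t' a b) = a := fun a b => congrArg Prod.fst (hinv₂ (a, b))
  have ht2 : ∀ a b, t (r' a b) (t' a b) = b := fun a b => congrArg Prod.snd (hinv₂ (a, b))
  have hFG : ∀ p, braidF r t p = braidG r t p := by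
    intro p; simp only [braidF, braidG, h1, h2, h3]
  have main : ∀ p, braidF r' t' p = braidG r' t' p := by
    intro p
    calc braidF r' t' p
        = braidF r' t' (braidG r t (braidG r' t' p)) := by
          rw [braidGG r t r' t' hr2 ht2]
      _ = braidF r' t' (braidF r t (braidG r' t' p)) := by rw [hFG]
      _ = braidG r' t' p := braidFF r' t' r t hr1 ht1 _
  refine ⟨fun a b c => ?_, fun a b c => ?_, fun a b c => ?_⟩
  · exact congrArg (fun q => q.1) (main (a, b, c))
  · exact congrArg (fun q => q.2.1) (main (a, b, c))
  · exact congrArg (fun q => q.2.2) (main (a, b, c))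

theorem stmt5 {Ω : Type*} (r t r' t' : Ω → Ω → Ω)
    (hbij : Function.Bijective (structMap r t))
    (hinv₁ : ∀ p : Ω × Ω, structMap r' t' (structMap r t p) = p)
    (hinv₂ : ∀ p : Ω × Ω, structMap r t (structMap r' t' p) = p) :
    IsEAS r t ↔ IsEAS r' t' :=
  ⟨key r t r' t' hinv₁ hinv₂, key r' t' r t hinv₂ hinv₁⟩
end

section
/- Let (Ω,→,▷) be a finite nondegenerate CEDS. Then for every α ∈ Ω, the map φ_α : Ω → Ω, β ↦ α→β, is bijective. -/
theorem stmt7 {Ω : Type*} [Finite Ω] (r t : Ω → Ω → Ω)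
    (hCEDS : IsCEDS r t)
    (hbij : Function.Bijective (fun p : Ω × Ω => (r p.1 p.2, t p.1 p.2))) :
    ∀ a : Ω, Function.Bijective (fun b : Ω => r a b) := by
  obtain ⟨h1, h2, h3, h4, h5⟩ := hCEDS
  intro a
  have hinj : Function.Injective (fun b : Ω => r a b) := by
    intro b b' h
    simp only at h
    have ht : t a b = t a b' := by
      calc t a b = t a (r a b) := (h3 a a b).symm
        _ = t a (r a b') := by rw [h]
        _ = t a b' := h3 a a b'
    have := hbij.injective (a₁ := (a, b)) (a₂ := (a, b')) (by simp [h, ht])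
    exact (Prod.mk.injEq _ _ _ _ ▸ this).2
  exact Finite.injective_iff_bijective.mp hinj
end

section
/- Let (Ω,→,▷) be a nondegenerate EAS (finite or not) such that α→β = β for all α,β ∈ Ω. Then for every β ∈ Ω, the map ψ_β : Ω → Ω, α ↦ α▷β, is bijective, and ψ_(β▷γ) = ψ_β ∘ ψ_γ⁻¹ for all β,γ ∈ Ω. -/
theorem stmt8 {Ω : Type*} (r t : Ω → Ω → Ω)
    (hEAS : IsEAS r t)
    (hbij : Function.Bijective (fun p : Ω × Ω => (r p.1 p.2, t p.1 p.2)))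
    (htriv : ∀ a b : Ω, r a b = b) :
    (∀ b : Ω, Function.Bijective (fun a : Ω => t a b)) ∧
      (∀ b c : Ω,
        (fun a : Ω => t a (t b c)) ∘ (fun a : Ω => t a c) = fun a : Ω => t a b) := by
  obtain ⟨-, -, h3⟩ := hEAS
  constructor
  · intro b
    constructor
    · intro a a' h
      have := hbij.1 (a₁ := (a, b)) (a₂ := (a', b)) (by simp [htriv, h])
      exact (Prod.mk.injEq _ _ _ _).mp this |>.1
    · intro y
      obtain ⟨⟨a, b'⟩, h⟩ := hbij.2 (b, y)
      simp only [htriv, Prod.mk.injEq] at h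
      exact ⟨a, h.1 ▸ h.2⟩
  · intro b c
    funext a
    simpa [htriv] using h3 a b c
end

section
/- Let (Ω,→,▷) be an EAS whose map φ(α,β) = (α→β, α▷β) is injective, and let Ω^▷ = {β ∈ Ω : α▷β = α for all α}. Then Ω^▷ is closed under → and ▷: if β,γ ∈ Ω^▷ then β→γ ∈ Ω^▷ and β▷γ ∈ Ω^▷. -/
theorem stmt11 {Ω : Type*} (r t : Ω → Ω → Ω)
    (hEAS : IsEAS r t)
    (hinj : Function.Injective (fun p : Ω × Ω => (r p.1 p.2, t p.1 p.2))) :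
    ∀ b ∈ {b : Ω | ∀ a : Ω, t a b = a}, ∀ c ∈ {b : Ω | ∀ a : Ω, t a b = a},
      r b c ∈ {b : Ω | ∀ a : Ω, t a b = a} ∧ t b c ∈ {b : Ω | ∀ a : Ω, t a b = a} := by
  obtain ⟨h1, h2, h3⟩ := hEAS
  intro b hb c hc
  constructor
  · intro a
    have key : (fun p : Ω × Ω => (r p.1 p.2, t p.1 p.2)) (t a (r b c), t b c)
        = (fun p : Ω × Ω => (r p.1 p.2, t p.1 p.2)) (a, b) := by
      simp only [Prod.mk.injEq]
      constructor
      · rw [h2, hc]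
      · rw [h3, hb]
    have := hinj key
    exact (Prod.mk.injEq _ _ _ _).mp this |>.1
  · intro a
    rw [hc b, hb a]
end

section
/- Let (Ω₁,*) be an abelian group with a left action ≻ of a group (Ω₂,⋆) on (Ω₁,*) by group automorphisms, and let Ω₃ be a nonempty set. Define on Ω = Ω₁×Ω₂×Ω₃ the operations (α₁,α₂,α₃)→(β₁,β₂,β₃) = (α₁*β₁, β₂, β₃) and (α₁,α₂,α₃)▷(β₁,β₂,β₃) = (β₂≻α₁, α₂⋆β₂⁻¹, α₃). Then (Ω,→,▷) is a CEDS, and it is nondegenerate (the map φ(x,y) = (x→y, x▷y) is a bijection of Ω²). -/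
/-- The arrow product on Ω₁ × Ω₂ × Ω₃. -/
def arrowOp {Ω₁ Ω₂ Ω₃ : Type*} [CommGroup Ω₁] [Group Ω₂] [MulDistribMulAction Ω₂ Ω₁] :
    Ω₁ × Ω₂ × Ω₃ → Ω₁ × Ω₂ × Ω₃ → Ω₁ × Ω₂ × Ω₃ :=
  fun a b => (a.1 * b.1, b.2.1, b.2.2)

/-- The triangle product on Ω₁ × Ω₂ × Ω₃. -/
def triOp {Ω₁ Ω₂ Ω₃ : Type*} [CommGroup Ω₁] [Group Ω₂] [MulDistribMulAction Ω₂ Ω₁] :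
    Ω₁ × Ω₂ × Ω₃ → Ω₁ × Ω₂ × Ω₃ → Ω₁ × Ω₂ × Ω₃ :=
  fun a b => (b.2.1 • a.1, a.2.1 * b.2.1⁻¹, a.2.2)

theorem stmt12 {Ω₁ Ω₂ Ω₃ : Type*} [CommGroup Ω₁] [Group Ω₂]
    [MulDistribMulAction Ω₂ Ω₁] [Nonempty Ω₃] :
    IsCEDS (arrowOp (Ω₁ := Ω₁) (Ω₂ := Ω₂) (Ω₃ := Ω₃)) triOp ∧
      Function.Bijective (fun p : (Ω₁ × Ω₂ × Ω₃) × (Ω₁ × Ω₂ × Ω₃) =>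
        (arrowOp p.1 p.2, triOp p.1 p.2)) := by
  constructor
  · refine ⟨?_, ?_, ?_, ?_, ?_⟩ <;> intro a b c <;>
      simp [arrowOp, triOp, Prod.ext_iff, mul_assoc, smul_smul, smul_mul',
        mul_comm, mul_left_comm, mul_inv_rev]
  · apply Function.bijective_iff_has_inverse.mpr
    refine ⟨fun q => ((q.1.2.1⁻¹ • q.2.1, q.2.2.1 * q.1.2.1, q.2.2.2),
      ((q.1.2.1⁻¹ • q.2.1)⁻¹ * q.1.1, q.1.2.1, q.1.2.2)), ?_, ?_⟩
    · intro p
      simp [arrowOp, triOp, Prod.ext_iff]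
    · intro q
      simp [arrowOp, triOp, Prod.ext_iff]
end

section
/- Let (A,m,Δ) be a (not necessarily unitary or counitary) bialgebra, i.e. m is associative, Δ is coassociative, and Δ∘m = (m⊗m)∘(Id⊗τ⊗Id)∘(Δ⊗Δ). Define Φ : A⊗A → A⊗A by Φ(a⊗b) = Σ a⁽¹⁾b ⊗ a⁽²⁾ where Δ(a) = Σ a⁽¹⁾⊗a⁽²⁾. Then Φ satisfies the ℓEAS braid equation (Id⊗Φ)∘(Φ⊗Id)∘(Id⊗Φ) = (Φ⊗Id)∘(Id⊗τ)∘(Φ⊗Id) on A⊗A⊗A, where τ is the flip of tensor factors. -/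
open TensorProduct

variable {K A : Type*} [Field K] [AddCommGroup A] [Module K A]

/-- The flip of tensor factors. -/
noncomputable def tauMap (K A : Type*) [Field K] [AddCommGroup A] [Module K A] :
    A ⊗[K] A →ₗ[K] A ⊗[K] A :=
  (TensorProduct.comm K A A).toLinearMap

/-- `f ⊗ Id` viewed on `(A ⊗ A) ⊗ A`. -/
noncomputable def leftT (K A : Type*) [Field K] [AddCommGroup A] [Module K A]
    (f : A ⊗[K] A →ₗ[K] A ⊗[K] A) : (A ⊗[K] A) ⊗[K] A →ₗ[K] (A ⊗[K] A) ⊗[K] A :=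
  TensorProduct.map f LinearMap.id

/-- `Id ⊗ f` viewed on `(A ⊗ A) ⊗ A` via the associator. -/
noncomputable def rightT (K A : Type*) [Field K] [AddCommGroup A] [Module K A]
    (f : A ⊗[K] A →ₗ[K] A ⊗[K] A) : (A ⊗[K] A) ⊗[K] A →ₗ[K] (A ⊗[K] A) ⊗[K] A :=
  (TensorProduct.assoc K A A A).symm.toLinearMap ∘ₗ
    TensorProduct.map LinearMap.id f ∘ₗ (TensorProduct.assoc K A A A).toLinearMap

/-- The ℓEAS braid equation for a linear map `Φ : A ⊗ A → A ⊗ A`. -/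
def IsLEAS (K A : Type*) [Field K] [AddCommGroup A] [Module K A]
    (Φ : A ⊗[K] A →ₗ[K] A ⊗[K] A) : Prop :=
  rightT K A Φ ∘ₗ leftT K A Φ ∘ₗ rightT K A Φ =
    leftT K A Φ ∘ₗ rightT K A (tauMap K A) ∘ₗ leftT K A Φ

/-- The ℓEAS map `Φ(a ⊗ b) = Σ a⁽¹⁾b ⊗ a⁽²⁾` of a (not necessarily unitary or
counitary) bialgebra `(A, m, Δ)`. -/
noncomputable def lEASofBialgebra (K A : Type*) [Field K] [AddCommGroup A] [Module K A]
    (m : A ⊗[K] A →ₗ[K] A) (Δ : A →ₗ[K] A ⊗[K] A) : A ⊗[K] A →ₗ[K] A ⊗[K] A :=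
  TensorProduct.map m LinearMap.id ∘ₗ
    (TensorProduct.assoc K A A A).symm.toLinearMap ∘ₗ
    TensorProduct.map LinearMap.id (tauMap K A) ∘ₗ
    (TensorProduct.assoc K A A A).toLinearMap ∘ₗ
    TensorProduct.map Δ LinearMap.id

/-! ### Auxiliary definitions and lemmas -/

/-- The core of the ℓEAS map: `Gmap ((x ⊗ y) ⊗ b) = m (x ⊗ b) ⊗ y`. -/
noncomputable def Gmap (K A : Type*) [Field K] [AddCommGroup A] [Module K A]
    (m : A ⊗[K] A →ₗ[K] A) : (A ⊗[K] A) ⊗[K] A →ₗ[K] A ⊗[K] A :=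
  TensorProduct.map m LinearMap.id ∘ₗ
    (TensorProduct.assoc K A A A).symm.toLinearMap ∘ₗ
    TensorProduct.map LinearMap.id (tauMap K A) ∘ₗ
    (TensorProduct.assoc K A A A).toLinearMap

lemma Gmap_tmul (m : A ⊗[K] A →ₗ[K] A) (x y b : A) :
    Gmap K A m ((x ⊗ₜ y) ⊗ₜ b) = m (x ⊗ₜ b) ⊗ₜ y := by
  simp [Gmap, tauMap]

lemma Phi_tmul (m : A ⊗[K] A →ₗ[K] A) (Δ : A →ₗ[K] A ⊗[K] A) (a b : A) :
    lEASofBialgebra K A m Δ (a ⊗ₜ b) = Gmap K A m (Δ a ⊗ₜ[K] b) := by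
  simp [lEASofBialgebra, Gmap]

lemma leftT_tmul (f : A ⊗[K] A →ₗ[K] A ⊗[K] A) (x : A ⊗[K] A) (c : A) :
    leftT K A f (x ⊗ₜ c) = f x ⊗ₜ c := by
  simp [leftT]

lemma rightT_tmul (f : A ⊗[K] A →ₗ[K] A ⊗[K] A) (a b c : A) :
    rightT K A f ((a ⊗ₜ b) ⊗ₜ c) =
      (TensorProduct.assoc K A A A).symm (a ⊗ₜ f (b ⊗ₜ c)) := by
  simp [rightT]

lemma rightT_tau_tmul (p q c : A) :
    rightT K A (tauMap K A) ((p ⊗ₜ q) ⊗ₜ c) = (p ⊗ₜ c) ⊗ₜ q := by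
  simp [rightT, tauMap]

/-- `Smap ((((x ⊗ y) ⊗ z) ⊗ (u ⊗ v)) ⊗ c) = (m (m (x⊗u) ⊗ c) ⊗ m (y⊗v)) ⊗ z`. -/
noncomputable def Smap (K A : Type*) [Field K] [AddCommGroup A] [Module K A]
    (m : A ⊗[K] A →ₗ[K] A) :
    (((A ⊗[K] A) ⊗[K] A) ⊗[K] (A ⊗[K] A)) ⊗[K] A →ₗ[K] (A ⊗[K] A) ⊗[K] A :=
  ((TensorProduct.assoc K A A A).symm.toLinearMap ∘ₗ
    TensorProduct.map m LinearMap.id ∘ₗ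
    (TensorProduct.tensorTensorTensorComm K A A A A).toLinearMap ∘ₗ
    TensorProduct.map LinearMap.id (TensorProduct.comm K A A).toLinearMap ∘ₗ
    (TensorProduct.assoc K (A ⊗[K] A) A A).toLinearMap) ∘ₗ
  TensorProduct.map
    (TensorProduct.map (TensorProduct.map m m) LinearMap.id ∘ₗ
      TensorProduct.map (TensorProduct.tensorTensorTensorComm K A A A A).toLinearMap
        LinearMap.id ∘ₗ
      (TensorProduct.assoc K (A ⊗[K] A) (A ⊗[K] A) A).symm.toLinearMap ∘ₗ
      TensorProduct.map LinearMap.id (TensorProduct.comm K A (A ⊗[K] A)).toLinearMap ∘ₗ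
      (TensorProduct.assoc K (A ⊗[K] A) A (A ⊗[K] A)).toLinearMap)
    LinearMap.id

lemma Smap_tmul (m : A ⊗[K] A →ₗ[K] A) (x y z u v c : A) :
    Smap K A m ((((x ⊗ₜ y) ⊗ₜ z) ⊗ₜ (u ⊗ₜ v)) ⊗ₜ c) =
      (m (m (x ⊗ₜ u) ⊗ₜ c) ⊗ₜ m (y ⊗ₜ v)) ⊗ₜ z := by
  simp [Smap]

/-- `S'map (((x ⊗ (y ⊗ z)) ⊗ (u ⊗ v)) ⊗ c) = (m (x ⊗ m (u⊗c)) ⊗ m (y⊗v)) ⊗ z`. -/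
noncomputable def S'map (K A : Type*) [Field K] [AddCommGroup A] [Module K A]
    (m : A ⊗[K] A →ₗ[K] A) :
    ((A ⊗[K] (A ⊗[K] A)) ⊗[K] (A ⊗[K] A)) ⊗[K] A →ₗ[K] (A ⊗[K] A) ⊗[K] A :=
  (TensorProduct.assoc K A A A).symm.toLinearMap ∘ₗ
  TensorProduct.map LinearMap.id
    ((TensorProduct.comm K A A).toLinearMap ∘ₗ
      TensorProduct.map LinearMap.id m ∘ₗ
      (TensorProduct.assoc K A A A).toLinearMap ∘ₗ
      TensorProduct.map (TensorProduct.comm K A A).toLinearMap LinearMap.id) ∘ₗ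
  TensorProduct.map m LinearMap.id ∘ₗ
  (TensorProduct.tensorTensorTensorComm K A (A ⊗[K] A) A A).toLinearMap ∘ₗ
  TensorProduct.map LinearMap.id
    ((TensorProduct.comm K A A).toLinearMap ∘ₗ
      TensorProduct.map LinearMap.id m ∘ₗ
      (TensorProduct.assoc K A A A).toLinearMap ∘ₗ
      TensorProduct.map (TensorProduct.comm K A A).toLinearMap LinearMap.id) ∘ₗ
  (TensorProduct.assoc K (A ⊗[K] (A ⊗[K] A)) (A ⊗[K] A) A).toLinearMap

lemma S'map_tmul (m : A ⊗[K] A →ₗ[K] A) (x y z u v c : A) :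
    S'map K A m (((x ⊗ₜ (y ⊗ₜ z)) ⊗ₜ (u ⊗ₜ v)) ⊗ₜ c) =
      (m (x ⊗ₜ m (u ⊗ₜ c)) ⊗ₜ m (y ⊗ₜ v)) ⊗ₜ z := by
  simp [S'map]

theorem stmt13 {K A : Type*} [Field K] [AddCommGroup A] [Module K A]
    (m : A ⊗[K] A →ₗ[K] A) (Δ : A →ₗ[K] A ⊗[K] A)
    (hm : m ∘ₗ TensorProduct.map m LinearMap.id =
      m ∘ₗ TensorProduct.map LinearMap.id m ∘ₗ (TensorProduct.assoc K A A A).toLinearMap)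
    (hΔ : (TensorProduct.assoc K A A A).toLinearMap ∘ₗ TensorProduct.map Δ LinearMap.id ∘ₗ Δ =
      TensorProduct.map LinearMap.id Δ ∘ₗ Δ)
    (hcompat : Δ ∘ₗ m =
      TensorProduct.map m m ∘ₗ (TensorProduct.tensorTensorTensorComm K A A A A).toLinearMap ∘ₗ
        TensorProduct.map Δ Δ) :
    IsLEAS K A (lEASofBialgebra K A m Δ) := by
  set Φ := lEASofBialgebra K A m Δ with hΦ
  -- pointwise versions of the hypotheses
  have hm' : ∀ x u c : A, m (m (x ⊗ₜ u) ⊗ₜ c) = m (x ⊗ₜ m (u ⊗ₜ c)) := by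
    intro x u c
    have := LinearMap.congr_fun hm ((x ⊗ₜ u) ⊗ₜ c)
    simpa using this
  have hΔ' : ∀ a : A, TensorProduct.map LinearMap.id Δ (Δ a) =
      TensorProduct.assoc K A A A (TensorProduct.map Δ LinearMap.id (Δ a)) := by
    intro a
    have := LinearMap.congr_fun hΔ a
    simpa using this.symm
  have hcompat' : ∀ x y : A, Δ (m (x ⊗ₜ y)) =
      TensorProduct.map m m
        ((TensorProduct.tensorTensorTensorComm K A A A A) (Δ x ⊗ₜ Δ y)) := by
    intro x y
    have := LinearMap.congr_fun hcompat (x ⊗ₜ y)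
    simpa using this
  -- RHS tower
  have r1 : ∀ (y z : A ⊗[K] A) (a₂ c : A),
      Gmap K A m (TensorProduct.map m m
          ((TensorProduct.tensorTensorTensorComm K A A A A) (y ⊗ₜ z)) ⊗ₜ c) ⊗ₜ a₂ =
        Smap K A m (((y ⊗ₜ a₂) ⊗ₜ z) ⊗ₜ c) := by
    intro y z a₂ c
    induction y using TensorProduct.induction_on with
    | zero => simp
    | tmul y₁ y₂ =>
      induction z using TensorProduct.induction_on with
      | zero => simp
      | tmul z₁ z₂ => simp [Gmap_tmul, Smap_tmul]
      | add p q hp hq =>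
        simp only [tmul_add, add_tmul, map_add, hp, hq]
    | add p q hp hq =>
      simp only [tmul_add, add_tmul, map_add, hp, hq]
  have r2 : ∀ (x : A ⊗[K] A) (b c : A),
      (leftT K A Φ ∘ₗ rightT K A (tauMap K A)) (Gmap K A m (x ⊗ₜ b) ⊗ₜ c) =
        Smap K A m ((TensorProduct.map Δ LinearMap.id x ⊗ₜ Δ b) ⊗ₜ c) := by
    intro x b c
    induction x using TensorProduct.induction_on with
    | zero => simp
    | tmul a₁ a₂ =>
      rw [LinearMap.comp_apply, Gmap_tmul, rightT_tau_tmul, leftT_tmul, hΦ, Phi_tmul,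
        hcompat', TensorProduct.map_tmul, LinearMap.id_apply, r1]
    | add p q hp hq =>
      simp only [add_tmul, map_add, tmul_add, hp, hq]
  have RHSeq : ∀ a b c : A,
      (leftT K A Φ ∘ₗ rightT K A (tauMap K A) ∘ₗ leftT K A Φ) ((a ⊗ₜ b) ⊗ₜ c) =
        Smap K A m ((TensorProduct.map Δ LinearMap.id (Δ a) ⊗ₜ Δ b) ⊗ₜ c) := by
    intro a b c
    rw [LinearMap.comp_apply, LinearMap.comp_apply, leftT_tmul, hΦ, Phi_tmul,
      ← LinearMap.comp_apply (leftT K A Φ), r2]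
  -- LHS tower
  have l1 : ∀ (u : A ⊗[K] A) (a₁ b₁ b₂ c : A),
      (TensorProduct.assoc K A A A).symm
          (m (a₁ ⊗ₜ m (b₁ ⊗ₜ c)) ⊗ₜ Gmap K A m (u ⊗ₜ b₂)) =
        S'map K A m (((a₁ ⊗ₜ u) ⊗ₜ (b₁ ⊗ₜ b₂)) ⊗ₜ c) := by
    intro u a₁ b₁ b₂ c
    induction u using TensorProduct.induction_on with
    | zero => simp
    | tmul u₁ u₂ => simp [Gmap_tmul, S'map_tmul]
    | add p q hp hq =>
      simp only [add_tmul, tmul_add, map_add, hp, hq]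
  have l2 : ∀ (t : A ⊗[K] A) (b₁ b₂ c : A),
      rightT K A Φ (Gmap K A m (t ⊗ₜ m (b₁ ⊗ₜ c)) ⊗ₜ b₂) =
        S'map K A m (((TensorProduct.map LinearMap.id Δ t) ⊗ₜ (b₁ ⊗ₜ b₂)) ⊗ₜ c) := by
    intro t b₁ b₂ c
    induction t using TensorProduct.induction_on with
    | zero => simp
    | tmul a₁ a₂ =>
      rw [Gmap_tmul, rightT_tmul, hΦ, Phi_tmul, l1, TensorProduct.map_tmul,
        LinearMap.id_apply]
    | add p q hp hq =>
      simp only [add_tmul, tmul_add, map_add, hp, hq]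
  have l3 : ∀ (s : A ⊗[K] A) (a c : A),
      (rightT K A Φ ∘ₗ leftT K A Φ)
          ((TensorProduct.assoc K A A A).symm (a ⊗ₜ Gmap K A m (s ⊗ₜ c))) =
        S'map K A m (((TensorProduct.map LinearMap.id Δ (Δ a)) ⊗ₜ s) ⊗ₜ c) := by
    intro s a c
    induction s using TensorProduct.induction_on with
    | zero => simp
    | tmul b₁ b₂ =>
      rw [Gmap_tmul, TensorProduct.assoc_symm_tmul, LinearMap.comp_apply, leftT_tmul,
        hΦ, Phi_tmul, l2]
    | add p q hp hq =>
      simp only [add_tmul, tmul_add, map_add, hp, hq]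
  have LHSeq : ∀ a b c : A,
      (rightT K A Φ ∘ₗ leftT K A Φ ∘ₗ rightT K A Φ) ((a ⊗ₜ b) ⊗ₜ c) =
        S'map K A m ((TensorProduct.map LinearMap.id Δ (Δ a) ⊗ₜ Δ b) ⊗ₜ c) := by
    intro a b c
    rw [LinearMap.comp_apply, LinearMap.comp_apply, rightT_tmul, hΦ, Phi_tmul,
      ← LinearMap.comp_apply (rightT K A Φ), l3]
  -- the bridge
  have bridge : ∀ (w : (A ⊗[K] A) ⊗[K] A) (s : A ⊗[K] A) (c : A),
      S'map K A m ((TensorProduct.assoc K A A A w ⊗ₜ s) ⊗ₜ c) =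
        Smap K A m ((w ⊗ₜ s) ⊗ₜ c) := by
    intro w s c
    induction w using TensorProduct.induction_on with
    | zero => simp
    | tmul xy z =>
      induction xy using TensorProduct.induction_on with
      | zero => simp
      | tmul x y =>
        induction s using TensorProduct.induction_on with
        | zero => simp
        | tmul u v => simp [Smap_tmul, S'map_tmul, hm']
        | add p q hp hq =>
          simp only [add_tmul, tmul_add, map_add, hp, hq]
      | add p q hp hq =>
        simp only [add_tmul, tmul_add, map_add, hp, hq]
    | add p q hp hq =>
      simp only [add_tmul, tmul_add, map_add, hp, hq]
  -- conclude
  unfold IsLEAS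
  apply TensorProduct.ext_threefold
  intro a b c
  rw [LHSeq, RHSeq, hΔ' a, bridge]
end

section
/- Let G be a group and K a field. In the ℓEAS ℓEAS(KG) on the group algebra KG given by Φ(g⊗h) = gh⊗g on group elements, an element a = Σ_{α∈G} a_α·α is a nonzero special vector of eigenvalue 1 (i.e. Φ(a⊗a) = a⊗a) if and only if there exist a nonzero scalar λ and a subgroup H ≤ G such that a = λ·Σ_{α∈H} α; in particular a_β(a_α − a_{β⁻¹α}) = 0 for all α,β ∈ G characterizes such a. -/
/-!
On the basis `g ⊗ h` of `KG ⊗ KG`, `Φ` is the permutation `(g, h) ↦ (g * h, g)`, so the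
`(x, y)`-coordinate of `Φ (a ⊗ a)` is `a_y * a_(y⁻¹ x)`. Hence `Φ (a ⊗ a) = a ⊗ a` says exactly that
`a_β (a_α - a_(β⁻¹ α)) = 0`: the coefficient function is invariant under left translation by
every element of its support. Such a nonzero function takes the value `a_1` on its whole support,
and the support contains `1` and is closed under products and inverses, i.e. is a subgroup.
-/

open TensorProduct MonoidAlgebra Module

section
variable {G R : Type*} [Group G] [Ring R] [NoZeroDivisors R]

theorem forall_mul_sub_eq_zero_iff (f : G → R) :
    (∀ α β, f β * (f α - f (β⁻¹ * α)) = 0) ↔ ∀ α β, f β ≠ 0 → f (β⁻¹ * α) = f α := by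
  simp only [mul_eq_zero, sub_eq_zero, or_iff_not_imp_left, eq_comm]

open scoped Classical in
theorem forall_mul_sub_eq_zero_iff_eq_indicator_subgroup {f : G → R} (hf0 : f ≠ 0) :
    (∀ α β, f β * (f α - f (β⁻¹ * α)) = 0) ↔
      ∃ lam : R, lam ≠ 0 ∧ ∃ H : Subgroup G, ∀ α, f α = if α ∈ H then lam else 0 := by
  rw [forall_mul_sub_eq_zero_iff]
  constructor
  · intro hf
    obtain ⟨β₀, hβ₀⟩ : ∃ β, f β ≠ 0 := by
      by_contra! h
      exact hf0 (funext h)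
    have hval : ∀ β, f β ≠ 0 → f β = f 1 := fun β hβ => by simpa using (hf β β hβ).symm
    have h1 : f 1 ≠ 0 := hval β₀ hβ₀ ▸ hβ₀
    refine ⟨f 1, h1, ⟨⟨⟨Function.support f, fun {g h} hg hh => ?_⟩, h1⟩, fun {g} hg => ?_⟩,
      fun α => ?_⟩
    · rwa [Function.mem_support, ← hf (g * h) g hg, inv_mul_cancel_left]
    · rwa [Function.mem_support, ← mul_one g⁻¹, hf 1 g hg]
    · split_ifs with hα
      · exact hval α hα
      · exact not_not.mp hα
  · rintro ⟨lam, -, H, hH⟩ α β hβ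
    have hβH : β ∈ H := by
      by_contra h
      simp [hH, h] at hβ
    simp only [hH, Subgroup.mul_mem_cancel_left H (H.inv_mem hβH)]
end

section
variable {K G : Type*} [CommRing K] [Group G]
  {Φ : MonoidAlgebra K G ⊗[K] MonoidAlgebra K G →ₗ[K] MonoidAlgebra K G ⊗[K] MonoidAlgebra K G}

theorem tensorProduct_basis_repr_map_apply
    (hΦ : ∀ g h : G, Φ (of K G g ⊗ₜ[K] of K G h) = of K G (g * h) ⊗ₜ[K] of K G g)
    (t : MonoidAlgebra K G ⊗[K] MonoidAlgebra K G) (x y : G) :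
    ((basis G K).tensorProduct (basis G K)).repr (Φ t) (x, y) =
      ((basis G K).tensorProduct (basis G K)).repr t (y, y⁻¹ * x) := by
  set B := (basis G K).tensorProduct (basis G K)
  have hB : ∀ g h : G, B (g, h) = of K G g ⊗ₜ[K] of K G h := fun g h => by
    simp [B, Basis.tensorProduct_apply, of_apply]
  suffices (Finsupp.lapply (x, y) ∘ₗ B.repr.toLinearMap ∘ₗ Φ) =
      Finsupp.lapply (y, y⁻¹ * x) ∘ₗ B.repr.toLinearMap from LinearMap.congr_fun this t
  refine B.ext fun ⟨g, h⟩ => ?_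
  simp only [LinearMap.comp_apply, LinearEquiv.coe_coe, Finsupp.lapply_apply]
  have hperm : (g * h, g) = (x, y) ↔ (g, h) = (y, y⁻¹ * x) := by
    constructor <;> rintro ⟨⟩ <;> simp
  classical
  rw [hB, hΦ, ← hB, ← hB, B.repr_self, B.repr_self, Finsupp.single_apply, Finsupp.single_apply]
  simp only [hperm]

theorem map_tmul_self_eq_self_iff
    (hΦ : ∀ g h : G, Φ (of K G g ⊗ₜ[K] of K G h) = of K G (g * h) ⊗ₜ[K] of K G g)
    (a : MonoidAlgebra K G) :
    Φ (a ⊗ₜ[K] a) = a ⊗ₜ[K] a ↔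
      ∀ α β : G, a.coeff β * (a.coeff α - a.coeff (β⁻¹ * α)) = 0 := by
  have hrepr : ∀ x y, ((basis G K).tensorProduct (basis G K)).repr (a ⊗ₜ[K] a) (x, y) =
      a.coeff x * a.coeff y := fun x y =>
    (Basis.tensorProduct_repr_tmul_apply _ _ _ _ _ _).trans (mul_comm _ _)
  rw [← ((basis G K).tensorProduct (basis G K)).repr.injective.eq_iff, Finsupp.ext_iff, Prod.forall]
  simp only [tensorProduct_basis_repr_map_apply hΦ, hrepr, mul_sub, sub_eq_zero]
  exact forall₂_congr fun α β => by rw [mul_comm (a.coeff α), eq_comm]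
end

open scoped Classical in
theorem stmt19 {K : Type*} [Field K] {G : Type*} [Group G]
    (Φ : MonoidAlgebra K G ⊗[K] MonoidAlgebra K G →ₗ[K]
          MonoidAlgebra K G ⊗[K] MonoidAlgebra K G)
    (hΦ : ∀ g h : G,
      Φ (MonoidAlgebra.of K G g ⊗ₜ[K] MonoidAlgebra.of K G h) =
        MonoidAlgebra.of K G (g * h) ⊗ₜ[K] MonoidAlgebra.of K G g)
    (a : MonoidAlgebra K G) (ha : a ≠ 0) :
    (Φ (a ⊗ₜ[K] a) = a ⊗ₜ[K] a ↔
      ∃ lam : K, lam ≠ 0 ∧ ∃ H : Subgroup G,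
        ∀ α : G, a.coeff α = if α ∈ H then lam else 0) ∧
    (Φ (a ⊗ₜ[K] a) = a ⊗ₜ[K] a ↔
      ∀ α β : G, a.coeff β * (a.coeff α - a.coeff (β⁻¹ * α)) = 0) := by
  have hcoeff : ⇑a.coeff ≠ 0 := by simpa using ha
  have key := map_tmul_self_eq_self_iff hΦ a
  exact ⟨key.trans (forall_mul_sub_eq_zero_iff_eq_indicator_subgroup hcoeff), key⟩
end
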